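/- arXiv:1812.02329 — 2 statements merged into one kernel-verified Lean document; each statement's English description precedes it below -/
import Mathlib

section
/- The assignments C ↦ f_C⁻, where f_C⁻(x) := ⨅ {y | (x,y) ∈ C}, and f ↦ C_f := ⋃_x {x} × [f∨(x), f∧(x)], are mutually inverse bijections between maximal chains of [0,1]² and join-continuous functions [0,1] → [0,1]. -/
open unitInterval

instance : Fact ((0:ℝ) ≤ 1) := ⟨zero_le_one⟩

/-- A self-map of `[0,1]` is join-continuous if it preserves all suprema. -/
def JoinCont (f : unitInterval → unitInterval) : Prop :=
  ∀ X : Set unitInterval, f (sSup X) = sSup (f '' X)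

/-- `f∨(x) := ⨆_{y < x} f(y)`. -/
noncomputable def jOf (f : unitInterval → unitInterval) (x : unitInterval) :
    unitInterval := sSup (f '' {y | y < x})

/-- `f∧(x) := ⨅_{x < y} f(y)`. -/
noncomputable def mOf (f : unitInterval → unitInterval) (x : unitInterval) :
    unitInterval := sInf (f '' {y | x < y})

/-- `f_C⁻(x) := ⨅ {y | (x,y) ∈ C}`. -/
noncomputable def fMinus (C : Set (unitInterval × unitInterval))
    (x : unitInterval) : unitInterval := sInf {y | (x, y) ∈ C}

/-- `C_f := ⋃_x {x} × [f∨(x), f∧(x)]`. -/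
def pathOf (f : unitInterval → unitInterval) :
    Set (unitInterval × unitInterval) :=
  {p | jOf f p.1 ≤ p.2 ∧ p.2 ≤ mOf f p.1}

lemma sSup_lt_eq (x : unitInterval) : sSup {y : unitInterval | y < x} = x := by
  refine le_antisymm (sSup_le fun y hy => hy.le) ?_
  by_contra h
  push_neg at h
  obtain ⟨z, hz1, hz2⟩ := exists_between h
  exact absurd (le_sSup (show z ∈ {y | y < x} from hz2)) (not_le.mpr hz1)

lemma JoinCont.mono {f : unitInterval → unitInterval} (hf : JoinCont f) :
    Monotone f := by
  intro x y hxy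
  have h := hf {x, y}
  rw [sSup_pair, sup_eq_right.mpr hxy, Set.image_pair, sSup_pair] at h
  exact le_sup_left.trans h.ge

lemma jOf_eq {f : unitInterval → unitInterval} (hf : JoinCont f)
    (x : unitInterval) : jOf f x = f x := by
  rw [jOf, ← hf, sSup_lt_eq]

lemma mOf_le {f : unitInterval → unitInterval} {x y : unitInterval}
    (h : x < y) : mOf f x ≤ f y := sInf_le ⟨y, h, rfl⟩

lemma le_mOf {f : unitInterval → unitInterval} (hf : Monotone f)
    (x : unitInterval) : f x ≤ mOf f x :=
  le_sInf fun _ ⟨y, hy, h⟩ => h ▸ hf hy.le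

lemma mem_of_comp {C : Set (unitInterval × unitInterval)}
    (hC : IsMaxChain (· ≤ ·) C) {p : unitInterval × unitInterval}
    (h : ∀ c ∈ C, p ≤ c ∨ c ≤ p) : p ∈ C := by
  have hchain : IsChain (· ≤ ·) (insert p C) := hC.1.insert fun b hb _ => h b hb
  rw [hC.2 hchain (Set.subset_insert _ _)]
  exact Set.mem_insert _ _

lemma sSup_mem_chain {C S : Set (unitInterval × unitInterval)}
    (hC : IsMaxChain (· ≤ ·) C) (hS : S ⊆ C) : sSup S ∈ C := by
  refine mem_of_comp hC fun c hc => ?_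
  by_cases h : ∀ s ∈ S, s ≤ c
  · exact Or.inl (sSup_le h)
  · push_neg at h
    obtain ⟨s, hsS, hsc⟩ := h
    have hne : s ≠ c := fun h => hsc (h ▸ le_rfl)
    rcases hC.1 (hS hsS) hc hne with h | h
    · exact absurd h hsc
    · exact Or.inr (h.trans (le_sSup hsS))

lemma sInf_mem_chain {C S : Set (unitInterval × unitInterval)}
    (hC : IsMaxChain (· ≤ ·) C) (hS : S ⊆ C) : sInf S ∈ C := by
  refine mem_of_comp hC fun c hc => ?_
  by_cases h : ∀ s ∈ S, c ≤ s
  · exact Or.inr (le_sInf h)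
  · push_neg at h
    obtain ⟨s, hsS, hsc⟩ := h
    have hne : s ≠ c := fun h => hsc (h ▸ le_rfl)
    rcases hC.1 (hS hsS) hc hne with h | h
    · exact Or.inl ((sInf_le hsS).trans h)
    · exact absurd h hsc

lemma sec_nonempty {C : Set (unitInterval × unitInterval)}
    (hC : IsMaxChain (· ≤ ·) C) (x : unitInterval) : ∃ y, (x, y) ∈ C := by
  set A : Set (unitInterval × unitInterval) := {p ∈ C | p.1 ≤ x} with hA
  have hs : sSup A ∈ C := sSup_mem_chain hC (Set.sep_subset _ _)
  have hs1 : (sSup A).1 ≤ x := by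
    rw [Prod.fst_sSup]
    exact sSup_le fun a ⟨p, hp, h⟩ => h ▸ hp.2
  refine ⟨(sSup A).2, mem_of_comp hC fun c hc => ?_⟩
  by_cases hcx : c.1 ≤ x
  · refine Or.inr (le_trans ?_ (show ((sSup A).1, (sSup A).2) ≤ (x, (sSup A).2) from ⟨hs1, le_rfl⟩))
    exact le_sSup ⟨hc, hcx⟩
  · refine Or.inl ?_
    have hne : sSup A ≠ c := fun h => hcx (h ▸ hs1)
    rcases hC.1 hs hc hne with h | h
    · exact ⟨le_of_not_ge hcx, h.2⟩
    · exact absurd (h.1.trans hs1) hcx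

lemma graph_mem {C : Set (unitInterval × unitInterval)}
    (hC : IsMaxChain (· ≤ ·) C) (x : unitInterval) : (x, fMinus C x) ∈ C := by
  set S : Set (unitInterval × unitInterval) := {p ∈ C | p.1 = x} with hS
  have hne : S.Nonempty := by
    obtain ⟨y, hy⟩ := sec_nonempty hC x
    exact ⟨(x, y), hy, rfl⟩
  have h1 : (sInf S).1 = x := by
    rw [Prod.fst_sInf]
    refine le_antisymm (sInf_le ?_) (le_sInf ?_)
    · obtain ⟨p, hp⟩ := hne; exact ⟨p, hp, hp.2⟩
    · rintro a ⟨p, hp, rfl⟩; exact hp.2.ge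
  have h2 : (sInf S).2 = fMinus C x := by
    rw [Prod.snd_sInf, fMinus]
    congr 1
    ext y
    constructor
    · rintro ⟨p, ⟨hp, hp1⟩, rfl⟩
      rw [show p = (x, p.2) from Prod.ext hp1 rfl] at hp; exact hp
    · intro hy; exact ⟨(x, y), ⟨hy, rfl⟩, rfl⟩
  have := sInf_mem_chain hC (Set.sep_subset _ _) (S := S)
  rwa [show sInf S = (x, fMinus C x) from Prod.ext h1 h2] at this

lemma fMinus_mono {C : Set (unitInterval × unitInterval)}
    (hC : IsMaxChain (· ≤ ·) C) : Monotone (fMinus C) := by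
  intro x y hxy
  by_cases hne : (x, fMinus C x) = (y, fMinus C y)
  · exact (congrArg Prod.snd hne).le
  rcases hC.1 (graph_mem hC x) (graph_mem hC y) hne with h | h
  · exact h.2
  · have hx : x = y := le_antisymm hxy h.1
    subst hx; rfl

lemma fMinus_joinCont {C : Set (unitInterval × unitInterval)}
    (hC : IsMaxChain (· ≤ ·) C) : JoinCont (fMinus C) := by
  intro X
  refine le_antisymm ?_ (sSup_le ?_)
  · have hmem : (sSup X, sSup (fMinus C '' X)) ∈ C := by
      have : sSup ((fun x => (x, fMinus C x)) '' X) ∈ C :=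
        sSup_mem_chain hC (by rintro p ⟨x, _, rfl⟩; exact graph_mem hC x)
      have h1 : (sSup ((fun x => (x, fMinus C x)) '' X)).1 = sSup X := by
        rw [Prod.fst_sSup]; congr 1; ext a
        constructor
        · rintro ⟨p, ⟨x, hx, rfl⟩, rfl⟩; exact hx
        · intro ha; exact ⟨(a, fMinus C a), ⟨a, ha, rfl⟩, rfl⟩
      have h2 : (sSup ((fun x => (x, fMinus C x)) '' X)).2 = sSup (fMinus C '' X) := by
        rw [Prod.snd_sSup]; congr 1; ext b
        constructor
        · rintro ⟨p, ⟨x, hx, rfl⟩, rfl⟩; exact ⟨x, hx, rfl⟩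
        · rintro ⟨x, hx, rfl⟩; exact ⟨(x, fMinus C x), ⟨x, hx, rfl⟩, rfl⟩
      rwa [show sSup ((fun x => (x, fMinus C x)) '' X) = (sSup X, sSup (fMinus C '' X))
        from Prod.ext h1 h2] at this
    exact sInf_le hmem
  · rintro b ⟨x, hx, rfl⟩
    exact fMinus_mono hC (le_sSup hx)

/-- The maps `C ↦ f_C⁻` and `f ↦ C_f` are mutually inverse bijections between
maximal chains of `[0,1]²` and join-continuous self-maps of `[0,1]`. -/
theorem stmt_14 :
    (∀ C : Set (unitInterval × unitInterval), IsMaxChain (· ≤ ·) C →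
        JoinCont (fMinus C) ∧ pathOf (fMinus C) = C) ∧
    (∀ f : unitInterval → unitInterval, JoinCont f →
        IsMaxChain (· ≤ ·) (pathOf f) ∧ fMinus (pathOf f) = f) := by
  constructor
  · intro C hC
    have hjc := fMinus_joinCont hC
    refine ⟨hjc, ?_⟩
    set f := fMinus C with hf
    ext ⟨a, b⟩
    constructor
    · rintro ⟨h1, h2⟩
      rw [jOf_eq hjc] at h1
      refine mem_of_comp hC fun ⟨c, d⟩ hcd => ?_
      rcases lt_trichotomy c a with h | h | h
      · refine Or.inr ⟨h.le, ?_⟩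
        by_cases hne : (c, d) = (a, f a)
        · rw [show d = f a from congrArg Prod.snd hne]; exact h1
        rcases hC.1 hcd (graph_mem hC a) hne with hle | hle
        · exact hle.2.trans h1
        · exact absurd hle.1 (not_le.mpr h)
      · subst h
        have hfd : f c ≤ d := sInf_le hcd
        rcases le_total b d with hbd | hbd
        · exact Or.inl ⟨le_rfl, hbd⟩
        · exact Or.inr ⟨le_rfl, hbd⟩
      · refine Or.inl ⟨h.le, ?_⟩
        exact h2.trans ((mOf_le h).trans (sInf_le hcd))
    · intro hab
      constructor
      · rw [jOf_eq hjc]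
        exact sInf_le hab
      · refine le_sInf ?_
        rintro z ⟨y, hy, rfl⟩
        by_cases hne : (a, b) = (y, f y)
        · exact absurd (congrArg Prod.fst hne) (ne_of_lt hy)
        rcases hC.1 hab (graph_mem hC y) hne with h | h
        · exact h.2
        · exact absurd (h.1.trans_lt hy) (lt_irrefl _)
  · intro f hf
    have hmono := hf.mono
    have hkey : ∀ x, (x, f x) ∈ pathOf f := fun x =>
      ⟨(jOf_eq hf x).le, le_mOf hmono x⟩
    constructor
    · constructor
      · rintro ⟨x1, y1⟩ ⟨h1, h1'⟩ ⟨x2, y2⟩ ⟨h2, h2'⟩ hne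
        rw [jOf_eq hf] at h1 h2
        rcases lt_trichotomy x1 x2 with h | h | h
        · exact Or.inl ⟨h.le, h1'.trans ((mOf_le h).trans h2)⟩
        · subst h
          rcases le_total y1 y2 with hy | hy
          · exact Or.inl ⟨le_rfl, hy⟩
          · exact Or.inr ⟨le_rfl, hy⟩
        · exact Or.inr ⟨h.le, h2'.trans ((mOf_le h).trans h1)⟩
      · rintro C' hC' hsub
        refine Set.Subset.antisymm hsub fun ⟨a, b⟩ hab => ?_
        by_contra hnot
        rcases not_and_or.mp hnot with h | h
        · rw [jOf_eq hf] at h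
          push_neg at h
          obtain ⟨z, ⟨c, hc, rfl⟩, hz⟩ : ∃ z ∈ f '' {y | y < (a, b).1}, (a, b).2 < z :=
            (lt_sSup_iff).mp (by rwa [← hf, sSup_lt_eq])
          have hmem : ((c, f c) : unitInterval × unitInterval) ∈ C' := hsub (hkey c)
          have hne : ((a, b) : unitInterval × unitInterval) ≠ (c, f c) := by
            intro he
            exact ne_of_lt hc (congrArg Prod.fst he).symm
          rcases hC' hab hmem hne with hle | hle
          · exact absurd (hle.1.trans_lt hc) (lt_irrefl _)
          · exact absurd (hle.2.trans_lt hz) (lt_irrefl _)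
        · push_neg at h
          obtain ⟨z, ⟨c, hc, rfl⟩, hz⟩ : ∃ z ∈ f '' {y | (a, b).1 < y}, z < (a, b).2 :=
            (sInf_lt_iff).mp h
          have hmem : ((c, f c) : unitInterval × unitInterval) ∈ C' := hsub (hkey c)
          have hne : ((a, b) : unitInterval × unitInterval) ≠ (c, f c) := by
            intro he
            exact ne_of_lt hc (congrArg Prod.fst he)
          rcases hC' hab hmem hne with hle | hle
          · exact absurd (hle.2.trans_lt hz) (lt_irrefl _)
          · exact absurd (hle.1.trans_lt hc) (lt_irrefl _)
    · funext x
      refine le_antisymm (sInf_le (hkey x)) (le_sInf ?_)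
      rintro y ⟨hy, _⟩
      rwa [jOf_eq hf] at hy
end

section
/- Every join-continuous function f : [0,1] → [0,1] is the pointwise supremum of the nonzero one-step functions e_{x,y} below it; in fact f = ⨆ {e_{x,y} | x, y ∈ ℚ ∩ [0,1], e_{x,y} ≤ f}. -/
/-!
A join-continuous `f` is monotone and left-continuous: `f t = ⨆ s < t, f s`, because
`t = sSup (Iio t)` in the dense order `[0,1]`. So any `c < f t` lies below some `f s` with `s < t`,
and the step `e_{s, f s}` (or, after squeezing rationals `s < q < t` and `c < y < f q`, the
rational step `e_{q,y}`) lies below `f` and takes a value above `c` at `t`.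
-/

open unitInterval

/-- The one-step function `e_{x,y}`: value `0` on `[0,x]` and `y` on `(x,1]`. -/
noncomputable def estep (x y : unitInterval) (t : unitInterval) : unitInterval :=
  if t ≤ x then 0 else y

namespace JoinCont

variable {f : I → I}

theorem monotone (hf : JoinCont f) : Monotone f :=
  OrderHomClass.mono (⟨f, hf⟩ : sSupHom I I)

theorem exists_lt_of_lt_apply (hf : JoinCont f) {c t : I} (hc : c < f t) :
    ∃ s < t, c < f s := by
  rw [← (Order.IsSuccPrelimit.of_dense t).sSup_Iio, hf, lt_sSup_iff] at hc
  simpa only [Set.exists_mem_image, Set.mem_Iio] using hc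

end JoinCont

theorem estep_apply_of_lt {x t : I} (y : I) (h : x < t) : estep x y t = y :=
  if_neg h.not_ge

theorem estep_ne_zero {x y : I} (hx : x < 1) (hy : y ≠ 0) : estep x y ≠ fun _ => 0 :=
  fun h => hy ((estep_apply_of_lt y hx).symm.trans (congrFun h 1))

theorem estep_le_of_monotone {f : I → I} (hf : Monotone f) {x y : I} (hy : y ≤ f x) :
    estep x y ≤ f := fun t => by
  unfold estep
  split_ifs with htx
  · exact nonneg'
  · exact hy.trans (hf (not_le.mp htx).le)

theorem iSup_estep_le {f : I → I} {S : Set (I × I)} (hS : ∀ p ∈ S, estep p.1 p.2 ≤ f) (t : I) :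
    ⨆ p ∈ S, estep p.1 p.2 t ≤ f t :=
  iSup₂_le fun p hp => hS p hp t

theorem le_iSup_estep {S : Set (I × I)} {a t : I} (h : ∀ c < a, ∃ p ∈ S, p.1 < t ∧ c ≤ p.2) :
    a ≤ ⨆ p ∈ S, estep p.1 p.2 t :=
  le_of_forall_lt_imp_le_of_dense fun c hc => by
    obtain ⟨p, hp, hpt, hcp⟩ := h c hc
    calc c ≤ p.2 := hcp
      _ = estep p.1 p.2 t := (estep_apply_of_lt p.2 hpt).symm
      _ ≤ _ := le_iSup₂ (f := fun p _ => estep p.1 p.2 t) p hp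

theorem unitInterval.exists_rat_btwn {a b : I} (h : a < b) :
    ∃ q : I, (∃ r : ℚ, (q : ℝ) = r) ∧ a < q ∧ q < b := by
  obtain ⟨r, har, hrb⟩ := _root_.exists_rat_btwn (show (a : ℝ) < b from h)
  exact ⟨⟨r, a.2.1.trans har.le, hrb.le.trans b.2.2⟩, ⟨r, rfl⟩, har, hrb⟩

/-- Every join-continuous `f : [0,1] → [0,1]` is the pointwise supremum of the
nonzero one-step functions below it, and even of the rational one-step
functions below it. -/
theorem stmt_18 (f : unitInterval → unitInterval) (hf : JoinCont f) :
    (∀ t, f t =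
      ⨆ p ∈ {p : unitInterval × unitInterval |
              estep p.1 p.2 ≤ f ∧ estep p.1 p.2 ≠ fun _ => 0},
        estep p.1 p.2 t) ∧
    (∀ t, f t =
      ⨆ p ∈ {p : unitInterval × unitInterval |
              (∃ q : ℚ, (p.1 : ℝ) = q) ∧ (∃ q : ℚ, (p.2 : ℝ) = q) ∧
                estep p.1 p.2 ≤ f},
        estep p.1 p.2 t) := by
  refine ⟨fun t => le_antisymm ?_ (iSup_estep_le (fun p hp => hp.1) t),
    fun t => le_antisymm ?_ (iSup_estep_le (fun p hp => hp.2.2) t)⟩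
  · refine le_iSup_estep fun c hc => ?_
    obtain ⟨s, hst, hcs⟩ := hf.exists_lt_of_lt_apply hc
    have hstep : estep s (f s) ≠ fun _ => 0 :=
      estep_ne_zero (hst.trans_le le_one') (nonneg'.trans_lt hcs).ne'
    exact ⟨(s, f s), ⟨estep_le_of_monotone hf.monotone le_rfl, hstep⟩, hst, hcs.le⟩
  · refine le_iSup_estep fun c hc => ?_
    obtain ⟨s, hst, hcs⟩ := hf.exists_lt_of_lt_apply hc
    obtain ⟨q, hq, hsq, hqt⟩ := unitInterval.exists_rat_btwn hst
    obtain ⟨y, hy, hcy, hyq⟩ :=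
      unitInterval.exists_rat_btwn (hcs.trans_le (hf.monotone hsq.le))
    exact ⟨(q, y), ⟨hq, hy, estep_le_of_monotone hf.monotone hyq.le⟩, hqt, hcy.le⟩
end
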